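/- arXiv:2508.02289 — 4 statements merged into one kernel-verified Lean document; each statement's English description precedes it below -/
import Mathlib

section
/- Given θ ∈ R, nominal states g̃_i = (p̃_i^x, p̃_i^y, φ̃_i) ∈ R^3, and diagonal weight matrices w_{ki}, w_{jk} built from index-differences of the θ-rotated nominal states as in the matrix-valued constraint, if three states satisfy W_{jk}(g_i − g_k) + W_{ki}(g_j − g_k) = 0 with W_{jk} = w_{jk}Θ^T and W_{ki} = w_{ki}Θ^T (where Θ = blockdiag(R(θ), 1)), then for any s ∈ R^3 and τ ∈ R^3, the transformed states g'_l = S g_l + τ (l ∈ {i,j,k}) with S = Θ diag(s) Θ^T also satisfy the same constraint W_{jk}(g'_i − g'_k) + W_{ki}(g'_j − g'_k) = 0. -/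
open Matrix Real

/-- Θ = blockdiag(R(θ), 1) ∈ ℝ^{3×3}. -/
noncomputable def Theta (θ : ℝ) : Matrix (Fin 3) (Fin 3) ℝ :=
  !![Real.cos θ, -Real.sin θ, 0;
     Real.sin θ,  Real.cos θ, 0;
     0, 0, 1]

theorem stmt5 (θ : ℝ) (gti gtj gtk : Fin 3 → ℝ)   -- nominal states g̃_i, g̃_j, g̃_k
    (gi gj gk : Fin 3 → ℝ)                        -- actual states
    (wjk wki Wjk Wki : Matrix (Fin 3) (Fin 3) ℝ)
    (hwjk : wjk = Matrix.diagonal ((Theta θ)ᵀ *ᵥ gtj - (Theta θ)ᵀ *ᵥ gtk))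
    (hwki : wki = Matrix.diagonal ((Theta θ)ᵀ *ᵥ gtk - (Theta θ)ᵀ *ᵥ gti))
    (hWjk : Wjk = wjk * (Theta θ)ᵀ) (hWki : Wki = wki * (Theta θ)ᵀ)
    (hconstraint : Wjk *ᵥ (gi - gk) + Wki *ᵥ (gj - gk) = 0)
    (s τ : Fin 3 → ℝ) (S : Matrix (Fin 3) (Fin 3) ℝ)
    (hS : S = Theta θ * Matrix.diagonal s * (Theta θ)ᵀ)
    (gi' gj' gk' : Fin 3 → ℝ)
    (hgi' : gi' = S *ᵥ gi + τ) (hgj' : gj' = S *ᵥ gj + τ) (hgk' : gk' = S *ᵥ gk + τ) :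
    Wjk *ᵥ (gi' - gk') + Wki *ᵥ (gj' - gk') = 0 := by
  have hT : (Theta θ)ᵀ * Theta θ = 1 := by
    ext i j
    fin_cases i <;> fin_cases j <;>
      simp [Theta, Matrix.mul_apply, Fin.sum_univ_succ, Matrix.one_apply] <;>
      nlinarith [Real.sin_sq_add_cos_sq θ]
  have hcomm : ∀ (d : Fin 3 → ℝ),
      Matrix.diagonal d * (Theta θ)ᵀ * S = Matrix.diagonal s * (Matrix.diagonal d * (Theta θ)ᵀ) := by
    intro d
    rw [hS]
    calc Matrix.diagonal d * (Theta θ)ᵀ * (Theta θ * Matrix.diagonal s * (Theta θ)ᵀ)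
        = Matrix.diagonal d * ((Theta θ)ᵀ * Theta θ) * Matrix.diagonal s * (Theta θ)ᵀ := by
          simp only [Matrix.mul_assoc]
      _ = Matrix.diagonal d * Matrix.diagonal s * (Theta θ)ᵀ := by rw [hT]; simp
      _ = Matrix.diagonal s * (Matrix.diagonal d * (Theta θ)ᵀ) := by
          rw [Matrix.diagonal_mul_diagonal, ← Matrix.mul_assoc, Matrix.diagonal_mul_diagonal]
          have h : (fun i => d i * s i) = fun i => s i * d i := by funext i; ring
          rw [h]
  have h1 : gi' - gk' = S *ᵥ (gi - gk) := by
    rw [hgi', hgk', Matrix.mulVec_sub]; abel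
  have h2 : gj' - gk' = S *ᵥ (gj - gk) := by
    rw [hgj', hgk', Matrix.mulVec_sub]; abel
  rw [h1, h2, Matrix.mulVec_mulVec, Matrix.mulVec_mulVec,
    hWjk, hwjk, hcomm, hWki, hwki, hcomm, ← hwjk, ← hWjk, ← hwki, ← hWki,
    ← Matrix.mulVec_mulVec, ← Matrix.mulVec_mulVec,
    ← Matrix.mulVec_add, hconstraint, Matrix.mulVec_zero]
end

section
/- Let T be a real (n−2)×(n−2) tridiagonal matrix whose entries arise from angle differences φ_{ij} = φ_i − φ_j as in equation (29) of the paper: diagonal entries T_{11} = φ_1 − φ_4, T_{kk} = φ_{k+1} − φ_{k+3} for intermediate k (with the indexing of the dual-entry path), superdiagonal T_{k,k+1} = φ_{k+2} − φ_{k} pattern and subdiagonal as given. Then det(T) = φ_{34}·φ_{45}·⋯·φ_{(n−1)n}·φ_{12}, i.e., the product of consecutive differences along the path times the entry-pair difference. -/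
open Finset

/-- Telescoping of the three-term recurrence for the determinant of the tridiagonal
matrix `M̂_ff^φ` of a dual-entry path (equation (29) of the paper):
`f_k = m_kk f_{k-1} - m_{k(k-1)} m_{(k-1)k} f_{k-2}` with `f_0 = 1`, `f_1 = φ_1 - φ_4`,
and the final determinant equals `φ_{34} φ_{45} ⋯ φ_{(n-1)n} · φ_{12}`. -/
theorem stmt7 (n : ℕ) (hn : 5 ≤ n) (φ : ℕ → ℝ) (f : ℕ → ℝ)
    (hf0 : f 0 = 1)
    (hf1 : f 1 = φ 1 - φ 4)
    (hf2 : f 2 = (φ 3 - φ 5) * f 1 - (φ 5 - φ 4) * (φ 3 - φ 1) * f 0)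
    (hrec : ∀ k, 3 ≤ k → k ≤ n - 3 →
      f k = (φ (k + 1) - φ (k + 3)) * f (k - 1)
              - (φ (k + 3) - φ (k + 2)) * (φ (k + 1) - φ k) * f (k - 2))
    (hlast : f (n - 2) = (φ (n - 1) - φ 2) * f (n - 3)
              - (φ 2 - φ n) * (φ (n - 1) - φ (n - 2)) * f (n - 4)) :
    f (n - 2) = (∏ k ∈ Finset.Icc 3 (n - 1), (φ k - φ (k + 1))) * (φ 1 - φ 2) := by
  obtain ⟨m, rfl⟩ : ∃ m, n = m + 5 := ⟨n - 5, by omega⟩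
  have key : ∀ k, 1 ≤ k → k ≤ m + 2 →
      f k = (∏ i ∈ Finset.Icc 3 (k + 1), (φ i - φ (i + 1))) * (φ 1 - φ (k + 3)) := by
    intro k
    induction k using Nat.strong_induction_on with
    | _ k ih =>
      intro hk1 hk2
      match k, hk1 with
      | 1, _ => simp [hf1]
      | 2, _ =>
        rw [hf2, hf0, hf1, show Finset.Icc 3 3 = {3} from rfl]
        simp only [Finset.prod_singleton]
        ring
      | (j + 3), _ =>
        have h1 := ih (j + 2) (by omega) (by omega) (by omega)
        have h2 := ih (j + 1) (by omega) (by omega) (by omega)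
        have h3 := hrec (j + 3) (by omega) (by omega)
        simp only [show j + 3 - 1 = j + 2 from rfl, show j + 3 - 2 = j + 1 from rfl] at h3
        have e1 : ∏ i ∈ Finset.Icc 3 (j + 3 + 1), (φ i - φ (i + 1)) =
            (∏ i ∈ Finset.Icc 3 (j + 3), (φ i - φ (i + 1))) * (φ (j + 4) - φ (j + 5)) :=
          Finset.prod_Icc_succ_top (by omega) _
        have e2 : ∏ i ∈ Finset.Icc 3 (j + 3), (φ i - φ (i + 1)) =
            (∏ i ∈ Finset.Icc 3 (j + 2), (φ i - φ (i + 1))) * (φ (j + 3) - φ (j + 4)) :=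
          Finset.prod_Icc_succ_top (by omega) _
        rw [h3, h1, h2, e1, e2]
        ring
  have k1 := key (m + 2) (by omega) (by omega)
  have k2 := key (m + 1) (by omega) (by omega)
  simp only [show m + 5 - 2 = m + 3 from by omega, show m + 5 - 1 = m + 4 from by omega,
    show m + 5 - 3 = m + 2 from by omega, show m + 5 - 4 = m + 1 from by omega] at hlast ⊢
  have e1 : ∏ i ∈ Finset.Icc 3 (m + 4), (φ i - φ (i + 1)) =
      (∏ i ∈ Finset.Icc 3 (m + 3), (φ i - φ (i + 1))) * (φ (m + 4) - φ (m + 5)) :=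
    Finset.prod_Icc_succ_top (by omega) _
  have e2 : ∏ i ∈ Finset.Icc 3 (m + 3), (φ i - φ (i + 1)) =
      (∏ i ∈ Finset.Icc 3 (m + 2), (φ i - φ (i + 1))) * (φ (m + 3) - φ (m + 4)) :=
    Finset.prod_Icc_succ_top (by omega) _
  rw [hlast, k1, k2, e1, e2]
  ring
end

section
/- Let A be an n×n real matrix all of whose leading principal minors are nonzero. Then there exists a diagonal matrix D such that every eigenvalue of DA has positive real part. -/
open Matrix


lemma lu_decomp : ∀ (n : ℕ) (A : Matrix (Fin n) (Fin n) ℝ),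
    (∀ k : ℕ, ∀ hk : k ≤ n,
      (A.submatrix (fun i : Fin k => Fin.castLE hk i) (fun i : Fin k => Fin.castLE hk i)).det ≠ 0) →
    ∃ L U : Matrix (Fin n) (Fin n) ℝ,
      (∀ i j : Fin n, i < j → L i j = 0) ∧ (∀ i, L i i = 1) ∧
      (∀ i j : Fin n, j < i → U i j = 0) ∧ (∀ i, U i i ≠ 0) ∧ A = L * U := by
  intro n
  induction n with
  | zero =>
    intro A _
    exact ⟨1, 1, fun i => i.elim0, fun i => i.elim0, fun i => i.elim0, fun i => i.elim0,
      Subsingleton.elim _ _⟩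
  | succ n ih =>
    intro A hminors
    have ha : A 0 0 ≠ 0 := by
      have h1 := hminors 1 (by omega)
      rwa [Matrix.det_fin_one, Matrix.submatrix_apply] at h1
    set a := A 0 0 with ha_def
    -- Schur complement
    set B : Matrix (Fin n) (Fin n) ℝ :=
      Matrix.of (fun i j => A i.succ j.succ - A i.succ 0 * A 0 j.succ / a) with hB_def
    have hBminors : ∀ k : ℕ, ∀ hk : k ≤ n,
        (B.submatrix (fun i : Fin k => Fin.castLE hk i) (fun i : Fin k => Fin.castLE hk i)).det ≠ 0 := by
      intro k hk
      have hk1 : k + 1 ≤ n + 1 := by omega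
      set A' : Matrix (Fin (k+1)) (Fin (k+1)) ℝ :=
        A.submatrix (fun i : Fin (k+1) => Fin.castLE hk1 i) (fun i : Fin (k+1) => Fin.castLE hk1 i)
        with hA'_def
      have hA'det : A'.det ≠ 0 := hminors (k+1) hk1
      set E : Matrix (Fin (k+1)) (Fin (k+1)) ℝ :=
        Matrix.of (fun i j => if j = 0 then (if i = 0 then 1 else -(A' i 0 / a))
          else (if i = j then 1 else 0)) with hE_def
      have hEdet : E.det = 1 := by
        rw [Matrix.det_of_lowerTriangular E]
        · have : ∀ i : Fin (k+1), E i i = 1 := by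
            intro i
            simp only [hE_def, Matrix.of_apply]
            by_cases h : i = 0 <;> simp [h]
          simp [this]
        · intro i j hij
          simp only [OrderDual.toDual_lt_toDual] at hij
          simp only [hE_def, Matrix.of_apply]
          have hj0 : j ≠ 0 := by
            rintro rfl
            simp [Fin.lt_def] at hij
          have hne : i ≠ j := ne_of_lt hij
          simp [hj0, hne]
      set M := E * A' with hM_def
      have hMdet : M.det = A'.det := by rw [hM_def, Matrix.det_mul, hEdet, one_mul]
      have hM0 : ∀ j, M 0 j = A' 0 j := by
        intro j
        rw [hM_def, Matrix.mul_apply, Fin.sum_univ_succ]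
        have : ∀ x : Fin k, E 0 x.succ * A' x.succ j = 0 := by
          intro x
          simp [hE_def, (Fin.succ_ne_zero x).symm, Fin.succ_ne_zero x]
        rw [Finset.sum_congr rfl (fun x _ => this x)]
        simp [hE_def]
      have hMs : ∀ (i : Fin k) (j : Fin (k+1)),
          M i.succ j = A' i.succ j - A' i.succ 0 * A' 0 j / a := by
        intro i j
        rw [hM_def, Matrix.mul_apply, Fin.sum_univ_succ]
        simp only [hE_def, Matrix.of_apply, Fin.succ_ne_zero, if_false, if_true, eq_self_iff_true]
        have : ∀ x : Fin k, (if i.succ = x.succ then (1:ℝ) else 0) * A' x.succ j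
            = (if x = i then A' x.succ j else 0) := by
          intro x
          by_cases h : x = i
          · subst h; simp
          · simp [Fin.succ_inj, h, Ne.symm h, fun hh : i = x => h hh.symm]
        rw [Finset.sum_congr rfl (fun x _ => this x), Finset.sum_ite_eq' Finset.univ i
          (fun x => A' x.succ j)]
        simp
        ring
      have hsub : M.submatrix Fin.succ Fin.succ
          = B.submatrix (fun i : Fin k => Fin.castLE hk i) (fun i : Fin k => Fin.castLE hk i) := by
        ext i j
        rw [Matrix.submatrix_apply, hMs i j.succ]
        have e1 : A' i.succ j.succ = A (Fin.castLE hk i).succ (Fin.castLE hk j).succ := rfl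
        have e2 : A' i.succ 0 = A (Fin.castLE hk i).succ 0 := rfl
        have e3 : A' 0 j.succ = A 0 (Fin.castLE hk j).succ := rfl
        rw [e1, e2, e3]
        simp [hB_def]
      have hM00 : M 0 0 = a := by
        rw [hM0 0]
        rfl
      have hMcol : ∀ i : Fin k, M i.succ 0 = 0 := by
        intro i
        rw [hMs i 0]
        have : A' 0 0 = a := rfl
        rw [this]
        field_simp
        ring
      have hexp := Matrix.det_succ_column_zero M
      rw [Fin.sum_univ_succ] at hexp
      have hzero : ∀ i : Fin k, (-1 : ℝ)^((i.succ : Fin (k+1)) : ℕ) * M i.succ 0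
          * (M.submatrix i.succ.succAbove Fin.succ).det = 0 := by
        intro i
        rw [hMcol i]
        ring
      rw [Finset.sum_congr rfl (fun i _ => hzero i), Finset.sum_const, smul_zero, add_zero,
        hM00, Fin.succAbove_zero, hsub] at hexp
      simp only [Fin.val_zero, pow_zero, one_mul] at hexp
      intro hcon
      rw [hcon, mul_zero] at hexp
      exact hA'det (hMdet ▸ hexp)
    obtain ⟨L', U', hL't, hL'd, hU't, hU'd, hBLU⟩ := ih B hBminors
    refine ⟨Matrix.of (fun i j => Fin.cases (Fin.cases (1:ℝ) (fun _ => 0) j)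
        (fun i' => Fin.cases (A i'.succ 0 / a) (fun j' => L' i' j') j) i),
      Matrix.of (fun i j => Fin.cases (Fin.cases a (fun j' => A 0 j'.succ) j)
        (fun i' => Fin.cases 0 (fun j' => U' i' j') j) i), ?_, ?_, ?_, ?_, ?_⟩
    · intro i j hij
      rcases Fin.eq_zero_or_eq_succ i with rfl | ⟨i', rfl⟩
      · rcases Fin.eq_zero_or_eq_succ j with rfl | ⟨j', rfl⟩
        · exact absurd hij (lt_irrefl _)
        · simp
      · rcases Fin.eq_zero_or_eq_succ j with rfl | ⟨j', rfl⟩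
        · exact absurd hij (by simp [Fin.lt_def])
        · simp only [Matrix.of_apply, Fin.cases_succ]
          exact hL't i' j' (by rwa [Fin.succ_lt_succ_iff] at hij)
    · intro i
      rcases Fin.eq_zero_or_eq_succ i with rfl | ⟨i', rfl⟩
      · simp
      · simp [hL'd i']
    · intro i j hij
      rcases Fin.eq_zero_or_eq_succ i with rfl | ⟨i', rfl⟩
      · exact absurd hij (by simp [Fin.lt_def])
      · rcases Fin.eq_zero_or_eq_succ j with rfl | ⟨j', rfl⟩
        · simp
        · simp only [Matrix.of_apply, Fin.cases_succ]
          exact hU't i' j' (by rwa [Fin.succ_lt_succ_iff] at hij)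
    · intro i
      rcases Fin.eq_zero_or_eq_succ i with rfl | ⟨i', rfl⟩
      · simpa using ha
      · simpa using hU'd i'
    · ext i j
      rw [Matrix.mul_apply, Fin.sum_univ_succ]
      rcases Fin.eq_zero_or_eq_succ i with rfl | ⟨i', rfl⟩
      · simp only [Matrix.of_apply, Fin.cases_zero, Fin.cases_succ, one_mul, zero_mul]
        rw [Finset.sum_const_zero, add_zero]
        rcases Fin.eq_zero_or_eq_succ j with rfl | ⟨j', rfl⟩
        · simp [ha_def]
        · simp
      · simp only [Matrix.of_apply, Fin.cases_zero, Fin.cases_succ]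
        rcases Fin.eq_zero_or_eq_succ j with rfl | ⟨j', rfl⟩
        · simp only [Fin.cases_zero, mul_zero, Finset.sum_const_zero, add_zero]
          field_simp
        · simp only [Fin.cases_succ]
          have hBE : (∑ x : Fin n, L' i' x * U' x j') = B i' j' := by
            rw [hBLU]
            rfl
          rw [hBE]
          simp only [hB_def, Matrix.of_apply]
          field_simp
          ring


lemma spec_mul_comm {n : ℕ} (M N : Matrix (Fin n) (Fin n) ℂ) :
    spectrum ℂ (M * N) = spectrum ℂ (N * M) := by
  ext μ
  by_cases hμ : μ = 0
  · subst hμ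
    rw [spectrum.zero_mem_iff, spectrum.zero_mem_iff, Matrix.isUnit_iff_isUnit_det,
      Matrix.isUnit_iff_isUnit_det, Matrix.det_mul, Matrix.det_mul, mul_comm]
  · have := spectrum.unit_mem_mul_comm (a := M) (b := N) (r := Units.mk0 μ hμ)
    simpa using this

lemma mem_spec_iff_eig {n : ℕ} (M : Matrix (Fin n) (Fin n) ℂ) (μ : ℂ) :
    μ ∈ spectrum ℂ M ↔ Module.End.HasEigenvalue (Matrix.toLin' M) μ := by
  rw [Module.End.hasEigenvalue_iff_mem_spectrum, ← Matrix.toLin_eq_toLin']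
  have h := (AlgEquiv.spectrum_eq (Matrix.toLinAlgEquiv (Pi.basisFun ℂ (Fin n))) M).symm
  have he : (Matrix.toLinAlgEquiv (Pi.basisFun ℂ (Fin n))) M
      = (Matrix.toLin (Pi.basisFun ℂ (Fin n)) (Pi.basisFun ℂ (Fin n))) M := rfl
  rw [h, he]
lemma map_mulRC {n : ℕ} (M N : Matrix (Fin n) (Fin n) ℝ) :
    (M * N).map Complex.ofReal = M.map Complex.ofReal * N.map Complex.ofReal := by
  ext i j
  simp [Matrix.mul_apply, Matrix.map_apply]

set_option maxHeartbeats 1600000 in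
/-- Fisher–Fuller / Ballantine diagonal stabilization: if all leading principal minors
of `A` are nonzero, there is a diagonal `D` such that every (complex) eigenvalue of
`D * A` has positive real part. -/
theorem stmt10 (n : ℕ) (A : Matrix (Fin n) (Fin n) ℝ)
    (hminors : ∀ k : ℕ, ∀ hk : k ≤ n,
      (A.submatrix (fun i : Fin k => Fin.castLE hk i) (fun i : Fin k => Fin.castLE hk i)).det ≠ 0) :
    ∃ d : Fin n → ℝ,
      ∀ μ ∈ spectrum ℂ (((Matrix.diagonal d * A).map (Complex.ofReal)) ), 0 < μ.re := by
  rcases Nat.eq_zero_or_pos n with hn | hn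
  · subst hn
    refine ⟨0, fun μ hμ => ?_⟩
    rw [spectrum.mem_iff] at hμ
    haveI : Subsingleton (Matrix (Fin 0) (Fin 0) ℂ) := by
      constructor; intro a b; ext i; exact i.elim0
    exact absurd (isUnit_of_subsingleton _) hμ
  obtain ⟨L, U, hLt, hLd, hUt, hUd, hALU⟩ := lu_decomp n A hminors
  haveI : Nonempty (Fin n) := Fin.pos_iff_nonempty.mp hn
  obtain ⟨c, hc_def⟩ : ∃ c : ℝ, c = 1 + ∑ p : Fin n, ∑ q : Fin n, (|U p q| + |L p q|) := ⟨_, rfl⟩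
  have hsum_nonneg : (0:ℝ) ≤ ∑ p : Fin n, ∑ q : Fin n, (|U p q| + |L p q|) := by positivity
  have hc1 : (1:ℝ) ≤ c := by simp only [hc_def]; linarith
  have hc0 : (0:ℝ) < c := by linarith
  have hUb : ∀ p q, |U p q| ≤ c := by
    intro p q
    have h1 : |U p q| + |L p q| ≤ ∑ q' : Fin n, (|U p q'| + |L p q'|) :=
      Finset.single_le_sum (f := fun q' => |U p q'| + |L p q'|)
        (fun x _ => by positivity) (Finset.mem_univ q)
    have h2 : (∑ q' : Fin n, (|U p q'| + |L p q'|)) ≤ ∑ p' : Fin n, ∑ q' : Fin n, (|U p' q'| + |L p' q'|) :=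
      Finset.single_le_sum (f := fun p' => ∑ q' : Fin n, (|U p' q'| + |L p' q'|))
        (fun x _ => by positivity) (Finset.mem_univ p)
    have h3 : (0:ℝ) ≤ |L p q| := abs_nonneg _
    simp only [hc_def]; linarith
  have hLb : ∀ p q, |L p q| ≤ c := by
    intro p q
    have h1 : |U p q| + |L p q| ≤ ∑ q' : Fin n, (|U p q'| + |L p q'|) :=
      Finset.single_le_sum (f := fun q' => |U p q'| + |L p q'|)
        (fun x _ => by positivity) (Finset.mem_univ q)
    have h2 : (∑ q' : Fin n, (|U p q'| + |L p q'|)) ≤ ∑ p' : Fin n, ∑ q' : Fin n, (|U p' q'| + |L p' q'|) :=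
      Finset.single_le_sum (f := fun p' => ∑ q' : Fin n, (|U p' q'| + |L p' q'|))
        (fun x _ => by positivity) (Finset.mem_univ p)
    have h3 : (0:ℝ) ≤ |U p q| := abs_nonneg _
    simp only [hc_def]; linarith
  obtain ⟨m, hm_def⟩ : ∃ m : ℝ, m = Finset.univ.inf' Finset.univ_nonempty (fun i : Fin n => |U i i|) := ⟨_, rfl⟩
  have hmle : ∀ i : Fin n, m ≤ |U i i| := fun i =>
    hm_def ▸ Finset.inf'_le _ (Finset.mem_univ i)
  have hm0 : 0 < m := by
    rw [hm_def, Finset.lt_inf'_iff]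
    exact fun i _ => abs_pos.mpr (hUd i)
  obtain ⟨ε, hε_def⟩ : ∃ e : ℝ, e = min 1 (m / (4 * (n:ℝ)^2 * c^2)) := ⟨_, rfl⟩
  have hn1 : (1:ℝ) ≤ (n:ℝ) := by exact_mod_cast hn
  have hε0 : 0 < ε := by
    rw [hε_def]
    apply lt_min one_pos
    positivity
  have hε1 : ε ≤ 1 := hε_def ▸ min_le_left _ _
  have hεm : 2 * (n:ℝ)^2 * c^2 * ε < m := by
    have h1 : ε ≤ m / (4 * (n:ℝ)^2 * c^2) := hε_def ▸ min_le_right _ _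
    have h2 : (0:ℝ) < 4 * (n:ℝ)^2 * c^2 := by positivity
    rw [le_div_iff₀ h2] at h1
    nlinarith
  obtain ⟨s, hs_def⟩ : ∃ s : Fin n → ℝ, s = fun k => if 0 < U k k then 1 else -1 := ⟨_, rfl⟩
  obtain ⟨d, hd_def⟩ : ∃ d : Fin n → ℝ, d = fun k => s k * ε ^ (2 * (k:ℕ)) := ⟨_, rfl⟩
  have hdU : ∀ k : Fin n, U k k * d k = |U k k| * ε ^ (2 * (k:ℕ)) := by
    intro k
    rcases lt_trichotomy (U k k) 0 with h | h | h
    · simp only [hd_def, hs_def]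
      rw [if_neg (not_lt.mpr h.le), abs_of_neg h]
      ring
    · exact absurd h (hUd k)
    · simp only [hd_def, hs_def, if_pos h, abs_of_pos h]
      ring
  have hdabs : ∀ k : Fin n, |d k| = ε ^ (2 * (k:ℕ)) := by
    intro k
    simp only [hd_def, hs_def, abs_mul, abs_pow, abs_of_pos hε0]
    by_cases h : 0 < U k k <;> simp [h]
  refine ⟨d, fun μ hμ => ?_⟩
  obtain ⟨X, hX_def⟩ : ∃ X : Matrix (Fin n) (Fin n) ℝ, X = U * Matrix.diagonal d * L := ⟨_, rfl⟩
  have hXapp : ∀ i j : Fin n, X i j = ∑ k : Fin n, U i k * d k * L k j := by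
    intro i j
    rw [hX_def, Matrix.mul_apply]
    congr 1
    ext k
    rw [Matrix.mul_diagonal]
  obtain ⟨G, hG_def⟩ : ∃ G : Matrix (Fin n) (Fin n) ℝ,
    G = Matrix.of (fun i j : Fin n => ε ^ (i:ℕ) * X i j * (ε ^ (j:ℕ))⁻¹) := ⟨_, rfl⟩
  -- spectrum transfer
  have hspec : μ ∈ spectrum ℂ (G.map Complex.ofReal) := by
    have e1 : (Matrix.diagonal d * A).map Complex.ofReal
        = (Matrix.diagonal d * L).map Complex.ofReal * U.map Complex.ofReal := by
      rw [hALU, ← Matrix.mul_assoc]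
      exact map_mulRC _ _
    rw [e1, spec_mul_comm] at hμ
    have e2 : U.map Complex.ofReal * (Matrix.diagonal d * L).map Complex.ofReal
        = X.map Complex.ofReal := by
      rw [hX_def, Matrix.mul_assoc]
      exact (map_mulRC _ _).symm
    rw [e2] at hμ
    -- conjugation by diagonal of powers of ε
    have hεC : (ε : ℂ) ≠ 0 := by exact_mod_cast hε0.ne'
    set T : (Matrix (Fin n) (Fin n) ℂ)ˣ :=
      { val := Matrix.diagonal (fun i : Fin n => (ε:ℂ) ^ (i:ℕ)),
        inv := Matrix.diagonal (fun i : Fin n => ((ε:ℂ) ^ (i:ℕ))⁻¹),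
        val_inv := by
          rw [Matrix.diagonal_mul_diagonal]
          convert Matrix.diagonal_one
          exact mul_inv_cancel₀ (pow_ne_zero _ hεC)
        inv_val := by
          rw [Matrix.diagonal_mul_diagonal]
          convert Matrix.diagonal_one
          exact inv_mul_cancel₀ (pow_ne_zero _ hεC) } with hT_def
    have hconj : (T : Matrix (Fin n) (Fin n) ℂ) * X.map Complex.ofReal * ((T⁻¹ : (Matrix (Fin n) (Fin n) ℂ)ˣ) : Matrix (Fin n) (Fin n) ℂ)
        = G.map Complex.ofReal := by
      ext i j
      simp only [hT_def, Units.inv_mk]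
      rw [Matrix.mul_diagonal, Matrix.diagonal_mul]
      simp only [Matrix.map_apply, hG_def, Matrix.of_apply]
      push_cast
      ring
    rw [← hconj]
    rw [spectrum.units_conjugate]
    exact hμ
  -- Gershgorin
  have heig := (mem_spec_iff_eig _ μ).mp hspec
  obtain ⟨i, hball⟩ := eigenvalue_mem_ball heig
  rw [Metric.mem_closedBall, dist_eq_norm] at hball
  have hRe : G i i - ∑ j ∈ Finset.univ.erase i, |G i j| ≤ μ.re := by
    have h1 : |(μ - (G.map Complex.ofReal) i i).re| ≤ ‖μ - (G.map Complex.ofReal) i i‖ :=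
      Complex.abs_re_le_norm _
    have h2 : (μ - (G.map Complex.ofReal) i i).re = μ.re - G i i := by
      simp [Matrix.map_apply]
    have h3 : ∑ j ∈ Finset.univ.erase i, ‖(G.map Complex.ofReal) i j‖
        = ∑ j ∈ Finset.univ.erase i, |G i j| := by
      apply Finset.sum_congr rfl
      intro j _
      simp [Matrix.map_apply, Complex.norm_real, Real.norm_eq_abs]
    rw [h2] at h1
    rw [h3] at hball
    have := abs_le.mp h1
    linarith [this.1, hball]
  -- estimates
  have hεpow : ∀ q : ℕ, 0 < ε ^ q := fun q => pow_pos hε0 q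
  have hterm : ∀ (j : Fin n) (k : Fin n), j ≠ i →
      |ε ^ (i:ℕ) * (U i k * d k * L k j) * (ε ^ (j:ℕ))⁻¹| ≤ c^2 * ε ^ (2*(i:ℕ)+1) := by
    intro j k hji
    by_cases hki : (k:ℕ) < (i:ℕ)
    · have : U i k = 0 := hUt i k (by rwa [Fin.lt_def])
      rw [this]
      simp only [zero_mul, mul_zero, abs_zero]
      positivity
    by_cases hkj : (k:ℕ) < (j:ℕ)
    · have : L k j = 0 := hLt k j (by rwa [Fin.lt_def])
      rw [this]
      simp only [mul_zero, zero_mul, abs_zero]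
      positivity
    push_neg at hki hkj
    have habs : |ε ^ (i:ℕ) * (U i k * d k * L k j) * (ε ^ (j:ℕ))⁻¹|
        = |U i k| * |L k j| * (ε ^ ((i:ℕ) + 2*(k:ℕ) - (j:ℕ))) := by
      rw [abs_mul, abs_mul, abs_mul, abs_mul, hdabs k, abs_inv, abs_pow, abs_pow,
        abs_of_pos hε0]
      rw [show (i:ℕ) + 2*(k:ℕ) - (j:ℕ) = ((i:ℕ) + 2*(k:ℕ)) - (j:ℕ) from rfl,
        pow_sub₀ ε hε0.ne' (by omega), pow_add]
      ring
    rw [habs]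
    have hexp : ε ^ ((i:ℕ) + 2*(k:ℕ) - (j:ℕ)) ≤ ε ^ (2*(i:ℕ)+1) := by
      apply pow_le_pow_of_le_one hε0.le hε1
      have hji' : (j:ℕ) ≠ (i:ℕ) := fun h => hji (Fin.ext h)
      omega
    calc |U i k| * |L k j| * ε ^ ((i:ℕ) + 2*(k:ℕ) - (j:ℕ))
        ≤ c * c * ε ^ (2*(i:ℕ)+1) := by
          apply mul_le_mul (mul_le_mul (hUb i k) (hLb k j) (abs_nonneg _) hc0.le) hexp
            (le_of_lt (hεpow _)) (by positivity)
      _ = c^2 * ε ^ (2*(i:ℕ)+1) := by ring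
  have hoffdiag : ∑ j ∈ Finset.univ.erase i, |G i j| ≤ (n:ℝ)^2 * c^2 * (ε ^ (2*(i:ℕ)) * ε) := by
    have hGb : ∀ j ∈ Finset.univ.erase i, |G i j| ≤ (n:ℝ) * (c^2 * ε ^ (2*(i:ℕ)+1)) := by
      intro j hj
      have hji : j ≠ i := Finset.ne_of_mem_erase hj
      rw [hG_def]
      simp only [Matrix.of_apply]
      rw [hXapp i j, Finset.mul_sum, Finset.sum_mul]
      calc |∑ k : Fin n, ε ^ (i:ℕ) * (U i k * d k * L k j) * (ε ^ (j:ℕ))⁻¹|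
          ≤ ∑ k : Fin n, |ε ^ (i:ℕ) * (U i k * d k * L k j) * (ε ^ (j:ℕ))⁻¹| :=
            Finset.abs_sum_le_sum_abs _ _
        _ ≤ ∑ k : Fin n, c^2 * ε ^ (2*(i:ℕ)+1) :=
            Finset.sum_le_sum (fun k _ => hterm j k hji)
        _ = (n:ℝ) * (c^2 * ε ^ (2*(i:ℕ)+1)) := by
            rw [Finset.sum_const, Finset.card_univ, Fintype.card_fin, nsmul_eq_mul]
    calc ∑ j ∈ Finset.univ.erase i, |G i j|
        ≤ ∑ j ∈ Finset.univ.erase i, (n:ℝ) * (c^2 * ε ^ (2*(i:ℕ)+1)) :=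
          Finset.sum_le_sum hGb
      _ ≤ (n:ℝ) * ((n:ℝ) * (c^2 * ε ^ (2*(i:ℕ)+1))) := by
          rw [Finset.sum_const, nsmul_eq_mul]
          apply mul_le_mul_of_nonneg_right _ (by positivity)
          have : (Finset.univ.erase i).card ≤ n := by
            calc (Finset.univ.erase i).card ≤ Finset.univ.card := Finset.card_erase_le.trans (le_refl _)
              _ = n := by rw [Finset.card_univ, Fintype.card_fin]
          exact_mod_cast this
      _ = (n:ℝ)^2 * c^2 * (ε ^ (2*(i:ℕ)) * ε) := by rw [pow_add]; ring
  have hGii : G i i = X i i := by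
    rw [hG_def]
    simp only [Matrix.of_apply]
    rw [mul_right_comm, mul_inv_cancel₀ (pow_ne_zero _ hε0.ne'), one_mul]
  have hdiag : m * ε ^ (2*(i:ℕ)) - (n:ℝ) * c^2 * (ε ^ (2*(i:ℕ)) * ε^2) ≤ G i i := by
    rw [hGii, hXapp i i]
    rw [← Finset.add_sum_erase _ _ (Finset.mem_univ i)]
    have h1 : m * ε ^ (2*(i:ℕ)) ≤ U i i * d i * L i i := by
      rw [hLd i, mul_one, hdU i]
      exact mul_le_mul_of_nonneg_right (hmle i) (hεpow _).le
    have h2 : -((n:ℝ) * c^2 * (ε ^ (2*(i:ℕ)) * ε^2)) ≤ ∑ k ∈ Finset.univ.erase i, U i k * d k * L k i := by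
      have hbnd : ∀ k ∈ Finset.univ.erase i, -(c^2 * (ε ^ (2*(i:ℕ)) * ε^2)) ≤ U i k * d k * L k i := by
        intro k hk
        have hki : k ≠ i := Finset.ne_of_mem_erase hk
        by_cases h : (k:ℕ) < (i:ℕ)
        · rw [hUt i k (by rwa [Fin.lt_def]), zero_mul, zero_mul]
          have : (0:ℝ) ≤ c^2 * (ε ^ (2*(i:ℕ)) * ε^2) := by positivity
          linarith
        · push_neg at h
          have hik : (i:ℕ) < (k:ℕ) := by
            have : (k:ℕ) ≠ (i:ℕ) := fun hh => hki (Fin.ext hh)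
            omega
          have habs : |U i k * d k * L k i| ≤ c^2 * (ε ^ (2*(i:ℕ)) * ε^2) := by
            rw [abs_mul, abs_mul, hdabs k]
            have hpow : ε ^ (2*(k:ℕ)) ≤ ε ^ (2*(i:ℕ)+2) :=
              pow_le_pow_of_le_one hε0.le hε1 (by omega)
            calc |U i k| * ε ^ (2*(k:ℕ)) * |L k i|
                ≤ c * ε ^ (2*(i:ℕ)+2) * c := by
                  apply mul_le_mul (mul_le_mul (hUb i k) hpow (hεpow _).le hc0.le) (hLb k i)
                    (abs_nonneg _) (by positivity)
              _ = c^2 * (ε ^ (2*(i:ℕ)) * ε^2) := by rw [pow_add]; ring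
          have := neg_abs_le (U i k * d k * L k i)
          linarith
      calc -((n:ℝ) * c^2 * (ε ^ (2*(i:ℕ)) * ε^2))
          ≤ ∑ k ∈ Finset.univ.erase i, -(c^2 * (ε ^ (2*(i:ℕ)) * ε^2)) := by
            rw [Finset.sum_const, nsmul_eq_mul]
            have hcard : ((Finset.univ.erase i).card : ℝ) ≤ (n:ℝ) := by
              have : (Finset.univ.erase i).card ≤ n := by
                calc (Finset.univ.erase i).card ≤ Finset.univ.card := Finset.card_erase_le.trans (le_refl _)
                  _ = n := by rw [Finset.card_univ, Fintype.card_fin]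
              exact_mod_cast this
            have hb : (0:ℝ) ≤ c^2 * (ε ^ (2*(i:ℕ)) * ε^2) := by positivity
            nlinarith
        _ ≤ ∑ k ∈ Finset.univ.erase i, U i k * d k * L k i := Finset.sum_le_sum hbnd
    linarith
  -- final
  have hP : 0 < ε ^ (2*(i:ℕ)) := hεpow _
  have hee : ε^2 ≤ ε := by nlinarith [hε0, hε1]
  have key : 0 < G i i - ∑ j ∈ Finset.univ.erase i, |G i j| := by
    have hnn2 : (n:ℝ) * c^2 * (ε ^ (2*(i:ℕ)) * ε^2) ≤ (n:ℝ)^2 * c^2 * (ε ^ (2*(i:ℕ)) * ε) := by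
      have h1 : (n:ℝ) ≤ (n:ℝ)^2 := by nlinarith
      have h2 : ε ^ (2*(i:ℕ)) * ε^2 ≤ ε ^ (2*(i:ℕ)) * ε :=
        mul_le_mul_of_nonneg_left hee hP.le
      exact mul_le_mul (mul_le_mul h1 le_rfl (by positivity) (by positivity)) h2
        (by positivity) (by positivity)
    have hfin : 0 < m * ε ^ (2*(i:ℕ)) - 2 * ((n:ℝ)^2 * c^2 * (ε ^ (2*(i:ℕ)) * ε)) := by
      have : (n:ℝ)^2 * c^2 * (ε ^ (2*(i:ℕ)) * ε) = ((n:ℝ)^2 * c^2 * ε) * ε ^ (2*(i:ℕ)) := by ring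
      rw [this]
      have h4 : 2 * ((n:ℝ)^2 * c^2 * ε) < m := by linarith [hεm]
      nlinarith [mul_pos (sub_pos.mpr h4) hP]
    linarith [hoffdiag, hdiag]
  linarith [hRe, key]
end

section
/- Let A(g̃, θ) ∈ R^{3n×6} be the matrix with i-th block row [Θ diag(Θ^T g̃_i), I_3], where Θ = blockdiag(R(θ), 1). Then rank(A) = 6 if and only if each of the three coordinate families {(Θ^T g̃_i)_1}_{i=1}^n, {(Θ^T g̃_i)_2}_{i=1}^n, {(Θ^T g̃_i)_3}_{i=1}^n contains at least two distinct values (equivalently, each affinely spans R). -/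
open Matrix Real

noncomputable def Amat (n : ℕ) (θ : ℝ) (g : Fin n → Fin 3 → ℝ) :
    Matrix (Fin n × Fin 3) (Fin 6) ℝ :=
  Matrix.of fun p c =>
    if h : (c : ℕ) < 3 then
      (Theta θ * Matrix.diagonal ((Theta θ)ᵀ *ᵥ g p.1)) p.2 ⟨(c : ℕ), h⟩
    else if (p.2 : ℕ) + 3 = (c : ℕ) then 1 else 0

lemma rank_eq_six_iff {m : Type*} [Fintype m] (A : Matrix m (Fin 6) ℝ) :
    A.rank = 6 ↔ ∀ v : Fin 6 → ℝ, A *ᵥ v = 0 → v = 0 := by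
  have hrn := LinearMap.finrank_range_add_finrank_ker A.mulVecLin
  have h6 : Module.finrank ℝ (Fin 6 → ℝ) = 6 := by simp
  rw [h6] at hrn
  rw [Matrix.rank]
  constructor
  · intro h v hv
    have hker : LinearMap.ker A.mulVecLin = ⊥ := by
      rw [← Submodule.finrank_eq_zero (R := ℝ)]
      omega
    rw [LinearMap.ker_eq_bot'] at hker
    exact hker v (by simpa using hv)
  · intro h
    have hker : LinearMap.ker A.mulVecLin = ⊥ := by
      rw [LinearMap.ker_eq_bot']
      intro v hv
      exact h v (by simpa using hv)
    rw [hker] at hrn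
    simpa using hrn

lemma Theta_orth (θ : ℝ) : (Theta θ)ᵀ * Theta θ = 1 := by
  have ht : (Theta θ)ᵀ = !![Real.cos θ, Real.sin θ, 0;
      -Real.sin θ, Real.cos θ, 0; 0, 0, 1] := by
    ext i j
    fin_cases i <;> fin_cases j <;> simp [Theta]
  rw [ht, Theta, Matrix.mul_fin_three]
  have hsc := Real.sin_sq_add_cos_sq θ
  ext i j
  fin_cases i <;> fin_cases j <;> simp <;> nlinarith [hsc]

lemma Theta_orth2 (θ : ℝ) : Theta θ * (Theta θ)ᵀ = 1 := by
  have ht : (Theta θ)ᵀ = !![Real.cos θ, Real.sin θ, 0;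
      -Real.sin θ, Real.cos θ, 0; 0, 0, 1] := by
    ext i j
    fin_cases i <;> fin_cases j <;> simp [Theta]
  rw [ht, Theta, Matrix.mul_fin_three]
  have hsc := Real.sin_sq_add_cos_sq θ
  ext i j
  fin_cases i <;> fin_cases j <;> simp <;> nlinarith [hsc]

lemma Amat_mulVec (n : ℕ) (θ : ℝ) (g : Fin n → Fin 3 → ℝ) (v : Fin 6 → ℝ)
    (i : Fin n) (s : Fin 3) :
    ((Amat n θ g) *ᵥ v) (i, s) =
      (Theta θ *ᵥ fun r => ((Theta θ)ᵀ *ᵥ g i) r * v (Fin.castLE (by norm_num) r)) s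
        + v (Fin.addNat s 3) := by
  have h0 : ((0:Fin 6):ℕ) < 3 := by decide
  have h1 : ((1:Fin 6):ℕ) < 3 := by decide
  have h2 : ((2:Fin 6):ℕ) < 3 := by decide
  have h3 : ¬((3:Fin 6):ℕ) < 3 := by decide
  have h4 : ¬((4:Fin 6):ℕ) < 3 := by decide
  have h5 : ¬((5:Fin 6):ℕ) < 3 := by decide
  have e3 : ((3:Fin 6):ℕ) = 3 := by decide
  have e4 : ((4:Fin 6):ℕ) = 4 := by decide
  have e5 : ((5:Fin 6):ℕ) = 5 := by decide
  fin_cases s <;>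
    simp [Matrix.mulVec, dotProduct, Fin.sum_univ_six, Fin.sum_univ_three, Amat,
      Matrix.mul_diagonal, Fin.castLE, Fin.addNat, h0, h1, h2, h3, h4, h5, e3, e4, e5] <;>
    ring

theorem stmt17 (n : ℕ) (hn : 2 ≤ n) (θ : ℝ) (g : Fin n → Fin 3 → ℝ) :
    (Amat n θ g).rank = 6 ↔
      ∀ r : Fin 3, ∃ i j : Fin n, ((Theta θ)ᵀ *ᵥ g i) r ≠ ((Theta θ)ᵀ *ᵥ g j) r := by
  have hn1 : 0 < n := by omega
  set q : Fin n → Fin 3 → ℝ := fun i => (Theta θ)ᵀ *ᵥ g i with hq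
  rw [rank_eq_six_iff]
  constructor
  · intro h r
    by_contra hc
    push_neg at hc
    set c : ℝ := q ⟨0, hn1⟩ r with hcdef
    have hall : ∀ i, q i r = c := fun i => hc i ⟨0, hn1⟩
    set x : Fin 3 → ℝ := Pi.single r 1 with hx
    set z : Fin 3 → ℝ := Pi.single r c with hz
    set y : Fin 3 → ℝ := -(Theta θ *ᵥ z) with hy
    set v : Fin 6 → ℝ := fun k =>
      if hk : (k : ℕ) < 3 then x ⟨k, hk⟩ else y ⟨(k : ℕ) - 3, by omega⟩ with hv
    have hv0 : v = 0 := by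
      apply h
      ext ⟨i, s⟩
      rw [Amat_mulVec]
      have hxv : (fun r' => q i r' * v (Fin.castLE (by norm_num) r')) = z := by
        funext r'
        have : v (Fin.castLE (by norm_num) r') = x r' := by
          simp only [hv]
          rw [dif_pos (show ((Fin.castLE (by norm_num) r' : Fin 6) : ℕ) < 3 from r'.isLt)]
          exact congrArg x (Fin.ext rfl)
        rw [this, hx, hz]
        by_cases hrr : r' = r
        · subst hrr; simp [hall i]
        · simp [Pi.single_eq_of_ne hrr]
      simp only [Pi.zero_apply]
      rw [hxv]
      have hvy : v (Fin.addNat s 3) = y s := by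
        simp only [hv, Fin.addNat]
        rw [dif_neg (by simp)]
        exact congrArg y (Fin.ext (by simp))
      rw [hvy, hy]
      simp
    have : v (Fin.castLE (by norm_num) r) = 1 := by
      simp only [hv]
      rw [dif_pos (by exact r.isLt)]
      simp [hx]
    rw [hv0] at this
    simp at this
  · intro h v hv
    set x : Fin 3 → ℝ := fun r => v (Fin.castLE (by norm_num) r) with hx
    set y : Fin 3 → ℝ := fun s => v (Fin.addNat s 3) with hy
    have key : ∀ i : Fin n, (fun r => q i r * x r) = -((Theta θ)ᵀ *ᵥ y) := by
      intro i
      have h1 : Theta θ *ᵥ (fun r => q i r * x r) = -y := by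
        funext s
        have := congrFun hv (i, s)
        rw [Amat_mulVec] at this
        simp only [Pi.zero_apply] at this
        simp only [Pi.neg_apply]
        linarith [this]
      calc (fun r => q i r * x r)
          = ((Theta θ)ᵀ * Theta θ) *ᵥ (fun r => q i r * x r) := by
            rw [Theta_orth]; simp
        _ = (Theta θ)ᵀ *ᵥ (Theta θ *ᵥ (fun r => q i r * x r)) := by
            rw [Matrix.mulVec_mulVec]
        _ = -((Theta θ)ᵀ *ᵥ y) := by rw [h1, Matrix.mulVec_neg]
    have hx0 : ∀ r, x r = 0 := by
      intro r
      obtain ⟨i, j, hij⟩ := h r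
      have := congrFun (key i) r
      have hj := congrFun (key j) r
      have : q i r * x r = q j r * x r := by rw [this, hj]
      by_contra hxr
      exact hij (mul_right_cancel₀ hxr this)
    have hw : (Theta θ)ᵀ *ᵥ y = 0 := by
      funext r
      have hk := congrFun (key ⟨0, hn1⟩) r
      rw [hx0 r, mul_zero] at hk
      simp only [Pi.neg_apply, Pi.zero_apply] at hk ⊢
      linarith
    have hy0all : y = 0 := by
      have hyy : y = Theta θ *ᵥ ((Theta θ)ᵀ *ᵥ y) := by
        rw [Matrix.mulVec_mulVec, Theta_orth2 θ, Matrix.one_mulVec]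
      rw [hyy, hw, Matrix.mulVec_zero]
    have hy0 : ∀ s, y s = 0 := fun s => congrFun hy0all s
    ext k
    by_cases hk : (k : ℕ) < 3
    · have : k = Fin.castLE (le_refl 6) k := rfl
      have hkx := hx0 ⟨k, hk⟩
      simpa [hx] using hkx
    · have hks : k = Fin.addNat (⟨(k : ℕ) - 3, by omega⟩ : Fin 3) 3 := by
        ext; simp [Fin.addNat]; omega
      have hky := hy0 ⟨(k : ℕ) - 3, by omega⟩
      rw [hks]
      simpa [hy] using hky
end
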